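/- arXiv:1210.8326 — 3 statements merged into one kernel-verified Lean document; each statement's English description precedes it below -/
import Mathlib

section
/- Let M be even, let s_1 < s_2 < ... < s_M be real numbers, let ρ > 0, and let p = [p_1,...,p_M] ∈ {0,1}^M be a pattern of Hamming weight M/2. Define the thresholds β_k = (s_k + s_{k+1})/2 for k = 1,...,M-1, together with β_0 = -∞ and β_M = +∞. Let Y = s_i + η where η is a zero-mean Gaussian random variable with variance 1/(2ρ), and let the demodulator output the bit p_k when β_{k-1} < Y ≤ β_k. Then the pattern bit-error rate P = (1/M) ∑_{i=1}^{M} Pr{output bit ≠ p_i | transmitted point is s_i} satisfies P = 1/2 + (1/M) ∑_{i=1}^{M} ∑_{k=1}^{M-1} g_{i,k} · Q((β_k − s_i)·√(2ρ)), where g_{i,k} = (p_{k+1} − p_k)(1 − 2 p_i) ∈ {0, ±1} (bits treated as integers). -/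
open MeasureTheory

/-- The Gaussian Q-function `Q(x) = (1/√(2π)) ∫_x^∞ e^{-t²/2} dt`. -/
noncomputable def Qfun (x : ℝ) : ℝ :=
  ∫ t in Set.Ioi x, (Real.sqrt (2 * Real.pi))⁻¹ * Real.exp (-t ^ 2 / 2)

/-- The Gaussian density with mean `μ` and variance `1/(2ρ)`
(the AWGN channel transition density at SNR `ρ`). -/
noncomputable def gaussDens (ρ μ y : ℝ) : ℝ :=
  Real.sqrt (ρ / Real.pi) * Real.exp (-ρ * (y - μ) ^ 2)

/-- The `k`-th decision region (for `k = 1, …, M`) of a threshold demodulator with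
thresholds `β 1 ≤ … ≤ β (M-1)`, together with `β 0 = -∞` and `β M = +∞`:
region `k` is `(β (k-1), β k]`. -/
def region (β : ℕ → ℝ) (M k : ℕ) : Set ℝ :=
  if k = 1 then Set.Iic (β 1)
  else if k = M then Set.Ioi (β (M - 1))
  else Set.Ioc (β (k - 1)) (β k)

/-- A bit viewed as a real number. -/
def bitR (b : Bool) : ℝ := if b then 1 else 0

/-!
Write `T k` for the probability that `Y` exceeds `β k`, with `T 0 = 1` and `T M = 0`. The
probability of landing in region `k` is `T (k-1) - T k`, so summation by parts turns the
error probability for `s i` into `[p 1 ≠ p i] + ∑ k, ([p (k+1) ≠ p i] - [p k ≠ p i]) T k`;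
the bracket difference is `g i k`, and standardising the Gaussian gives
`T k = Q((β k - s i)√(2ρ))`. Averaging over `i`, the boundary terms contribute `1/2` because
exactly half the bits of a balanced pattern differ from `p 1`. Increasing points make the
midpoint thresholds increasing, which is what makes region `k` the interval between
consecutive thresholds.
-/

theorem integral_comp_sub_right_Ioi {E : Type*} [NormedAddCommGroup E] [NormedSpace ℝ E]
    (g : ℝ → E) (a c : ℝ) : ∫ x in Set.Ioi a, g (x - c) = ∫ x in Set.Ioi (a - c), g x := by
  have h := (measurePreserving_sub_right volume c).setIntegral_preimage_emb
    (measurableEmbedding_subRight c) g (Set.Ioi (a - c))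
  rwa [Set.preimage_sub_const_Ioi, sub_add_cancel] at h

theorem gaussDens_eq {ρ : ℝ} (hρ : 0 < ρ) (μ y : ℝ) :
    gaussDens ρ μ y = Real.sqrt (2 * ρ) *
      ((Real.sqrt (2 * Real.pi))⁻¹ * Real.exp (-((y - μ) * Real.sqrt (2 * ρ)) ^ 2 / 2)) := by
  have hsq : Real.sqrt (2 * ρ) ^ 2 = 2 * ρ := Real.sq_sqrt (by positivity)
  have hconst : Real.sqrt (ρ / Real.pi) = Real.sqrt (2 * ρ) * (Real.sqrt (2 * Real.pi))⁻¹ := by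
    rw [← Real.sqrt_inv, ← Real.sqrt_mul (by positivity)]
    congr 1
    field_simp
  rw [gaussDens, hconst, mul_pow, hsq]
  ring_nf

theorem integrable_gaussDens {ρ : ℝ} (hρ : 0 < ρ) (μ : ℝ) : Integrable (gaussDens ρ μ) :=
  ((integrable_exp_neg_mul_sq hρ).comp_sub_right μ).const_mul _

theorem integral_gaussDens {ρ : ℝ} (hρ : 0 < ρ) (μ : ℝ) : ∫ y, gaussDens ρ μ y = 1 := by
  calc ∫ y, gaussDens ρ μ y = ∫ y, Real.sqrt (ρ / Real.pi) * Real.exp (-ρ * y ^ 2) :=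
        integral_sub_right_eq_self (fun y => Real.sqrt (ρ / Real.pi) * Real.exp (-ρ * y ^ 2)) μ
    _ = Real.sqrt (ρ / Real.pi * (Real.pi / ρ)) := by
        rw [integral_const_mul, integral_gaussian, Real.sqrt_mul (by positivity)]
    _ = 1 := by rw [div_mul_div_cancel₀ Real.pi_ne_zero, div_self hρ.ne', Real.sqrt_one]

theorem setIntegral_gaussDens_Ioi {ρ : ℝ} (hρ : 0 < ρ) (μ b : ℝ) :
    ∫ y in Set.Ioi b, gaussDens ρ μ y = Qfun ((b - μ) * Real.sqrt (2 * ρ)) := by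
  have hc : 0 < Real.sqrt (2 * ρ) := Real.sqrt_pos.mpr (by positivity)
  simp_rw [gaussDens_eq hρ, Qfun]
  rw [integral_const_mul, integral_comp_sub_right_Ioi
    (fun x => (Real.sqrt (2 * Real.pi))⁻¹ * Real.exp (-(x * Real.sqrt (2 * ρ)) ^ 2 / 2)),
    ← integral_comp_mul_right_Ioi' _ _ hc, smul_eq_mul]

/-- `thresholdTail f β M k` is the mass of `f` above `β k`, with the conventions
`β 0 = -∞` and `β M = +∞` of `region`. -/
noncomputable def thresholdTail (f : ℝ → ℝ) (β : ℕ → ℝ) (M k : ℕ) : ℝ :=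
  if k = 0 then ∫ y, f y else if k < M then ∫ y in Set.Ioi (β k), f y else 0

theorem setIntegral_region {f : ℝ → ℝ} (hf : Integrable f) {β : ℕ → ℝ} {M k : ℕ}
    (hβ : MonotoneOn β (Set.Icc 1 (M - 1))) (hM : 2 ≤ M) (hk : k ∈ Finset.Icc 1 M) :
    ∫ y in region β M k, f y = thresholdTail f β M (k - 1) - thresholdTail f β M k := by
  rw [Finset.mem_Icc] at hk
  by_cases hk1 : k = 1
  · subst hk1
    rw [region, if_pos rfl, thresholdTail, thresholdTail, if_pos rfl, if_neg one_ne_zero,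
      if_pos (by omega : 1 < M),
      ← intervalIntegral.integral_Iic_add_Ioi hf.integrableOn hf.integrableOn, add_sub_cancel_right]
  by_cases hkM : k = M
  · subst hkM
    rw [region, if_neg hk1, if_pos rfl, thresholdTail, thresholdTail, if_neg (by omega),
      if_pos (by omega), if_neg (by omega), if_neg (lt_irrefl k), sub_zero]
  · have hle : β (k - 1) ≤ β k :=
      hβ ⟨by omega, by omega⟩ ⟨by omega, by omega⟩ (Nat.sub_le k 1)
    have hunion := setIntegral_union (Set.Ioc_disjoint_Ioi le_rfl) measurableSet_Ioi
      hf.integrableOn hf.integrableOn (f := f) (s := Set.Ioc (β (k - 1)) (β k))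
    rw [Set.Ioc_union_Ioi_eq_Ioi hle] at hunion
    rw [region, if_neg hk1, if_neg hkM, thresholdTail, thresholdTail, if_neg (by omega),
      if_pos (by omega), if_neg (by omega), if_pos (by omega), hunion, add_sub_cancel_right]

theorem monotoneOn_midpoints {M : ℕ} {s β : ℕ → ℝ}
    (hs : ∀ k ∈ Finset.Icc 1 (M - 1), s k < s (k + 1))
    (hβ : ∀ k ∈ Finset.Icc 1 (M - 1), β k = (s k + s (k + 1)) / 2) :
    MonotoneOn β (Set.Icc 1 (M - 1)) := by
  refine monotoneOn_of_le_succ Set.ordConnected_Icc fun k _ hk hk' => ?_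
  simp only [Order.succ_eq_add_one, Set.mem_Icc] at hk hk' ⊢
  have h₁ := hs k (by simp; omega)
  have h₂ := hs (k + 1) (by simp; omega)
  rw [hβ k (by simp; omega), hβ (k + 1) (by simp; omega)]
  linarith

theorem sum_Icc_mul_sub_eq {R : Type*} [CommRing R] (a A : ℕ → R) {M : ℕ} (hM : 1 ≤ M) :
    ∑ k ∈ Finset.Icc 1 M, a k * (A (k - 1) - A k)
      = a 1 * A 0 - a M * A M + ∑ k ∈ Finset.Icc 1 (M - 1), (a (k + 1) - a k) * A k := by
  induction M, hM using Nat.le_induction with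
  | base => simp [mul_sub]
  | succ n hn ih =>
    obtain ⟨m, rfl⟩ : ∃ m, n = m + 1 := ⟨n - 1, by omega⟩
    rw [Finset.sum_Icc_succ_top (by omega), ih, Nat.add_sub_cancel, Nat.add_sub_cancel,
      Finset.sum_Icc_succ_top (by omega)]
    ring

theorem ite_ne_eq_bitR (b c : Bool) :
    (if b ≠ c then (1 : ℝ) else 0) = bitR b + bitR c - 2 * bitR b * bitR c := by
  cases b <;> cases c <;> norm_num [bitR]

theorem card_filter_ne_of_card_filter_eq_half {M : ℕ} (hM : Even M) (p : ℕ → Bool)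
    (hp : ((Finset.Icc 1 M).filter (fun i => p i = true)).card = M / 2) (b : Bool) :
    ((Finset.Icc 1 M).filter (fun i => b ≠ p i)).card = M / 2 := by
  have hsplit :=
    Finset.card_filter_add_card_filter_not (s := Finset.Icc 1 M) (fun i => p i = true)
  rw [Nat.card_Icc, Nat.add_sub_cancel, hp] at hsplit
  cases b
  · simpa only [ne_eq, Bool.false_eq, Bool.not_eq_false, Bool.not_eq_true'] using hp
  · simp only [ne_eq, Bool.true_eq, Bool.not_eq_true] at hsplit ⊢
    obtain ⟨m, rfl⟩ := hM
    omega

theorem sum_ite_ne_mul_sub_eq (p : ℕ → Bool) (c : Bool) (A : ℕ → ℝ) {M : ℕ} (hM : 1 ≤ M)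
    (hA0 : A 0 = 1) (hAM : A M = 0) :
    ∑ k ∈ Finset.Icc 1 M, (if p k ≠ c then (1 : ℝ) else 0) * (A (k - 1) - A k)
      = (if p 1 ≠ c then 1 else 0) + ∑ k ∈ Finset.Icc 1 (M - 1),
          (bitR (p (k + 1)) - bitR (p k)) * (1 - 2 * bitR c) * A k := by
  rw [sum_Icc_mul_sub_eq _ A hM, hA0, hAM, mul_one, mul_zero, sub_zero]
  congr 1
  refine Finset.sum_congr rfl fun k _ => ?_
  rw [ite_ne_eq_bitR, ite_ne_eq_bitR]
  ring

theorem sum_ite_ne_setIntegral_region {M : ℕ} (hM : 2 ≤ M) {β : ℕ → ℝ}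
    (hβ : MonotoneOn β (Set.Icc 1 (M - 1))) {ρ : ℝ} (hρ : 0 < ρ) (p : ℕ → Bool) (μ : ℝ)
    (c : Bool) :
    ∑ k ∈ Finset.Icc 1 M, (if p k ≠ c then ∫ y in region β M k, gaussDens ρ μ y else 0)
      = (if p 1 ≠ c then 1 else 0) + ∑ k ∈ Finset.Icc 1 (M - 1),
          (bitR (p (k + 1)) - bitR (p k)) * (1 - 2 * bitR c) *
            Qfun ((β k - μ) * Real.sqrt (2 * ρ)) := by
  have hA : ∀ k ∈ Finset.Icc 1 (M - 1),
      thresholdTail (gaussDens ρ μ) β M k = Qfun ((β k - μ) * Real.sqrt (2 * ρ)) := by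
    intro k hk
    rw [Finset.mem_Icc] at hk
    rw [thresholdTail, if_neg (by omega), if_pos (by omega), setIntegral_gaussDens_Ioi hρ]
  calc ∑ k ∈ Finset.Icc 1 M, (if p k ≠ c then ∫ y in region β M k, gaussDens ρ μ y else 0)
      = ∑ k ∈ Finset.Icc 1 M, (if p k ≠ c then (1 : ℝ) else 0) *
          (thresholdTail (gaussDens ρ μ) β M (k - 1) - thresholdTail (gaussDens ρ μ) β M k) :=
        Finset.sum_congr rfl fun k hk => by
          rw [boole_mul, setIntegral_region (integrable_gaussDens hρ μ) hβ hM hk]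
    _ = _ := by
        rw [sum_ite_ne_mul_sub_eq p c _ (by omega)
          (by rw [thresholdTail, if_pos rfl, integral_gaussDens hρ μ])
          (by rw [thresholdTail, if_neg (by omega), if_neg (lt_irrefl M)])]
        congr 1
        exact Finset.sum_congr rfl fun k hk => by rw [hA k hk]

theorem pattern_ber_midpoints (M : ℕ) (hM : Even M) (hM0 : 0 < M)
    (s : ℕ → ℝ) (hs : ∀ k ∈ Finset.Icc 1 (M - 1), s k < s (k + 1))
    (ρ : ℝ) (hρ : 0 < ρ)
    (p : ℕ → Bool)
    (hp : ((Finset.Icc 1 M).filter (fun i => p i = true)).card = M / 2)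
    (β : ℕ → ℝ) (hβ : ∀ k ∈ Finset.Icc 1 (M - 1), β k = (s k + s (k + 1)) / 2) :
    (M : ℝ)⁻¹ * ∑ i ∈ Finset.Icc 1 M, ∑ k ∈ Finset.Icc 1 M,
        (if p k ≠ p i then ∫ y in region β M k, gaussDens ρ (s i) y else 0)
      = 1 / 2 + (M : ℝ)⁻¹ * ∑ i ∈ Finset.Icc 1 M, ∑ k ∈ Finset.Icc 1 (M - 1),
          (bitR (p (k + 1)) - bitR (p k)) * (1 - 2 * bitR (p i)) *
            Qfun ((β k - s i) * Real.sqrt (2 * ρ)) := by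
  have hM2 : 2 ≤ M := by
    obtain ⟨m, rfl⟩ := hM
    omega
  have hbalanced : (M : ℝ)⁻¹ * (M / 2 : ℕ) = 1 / 2 := by
    rw [Nat.cast_div (even_iff_two_dvd.mp hM) two_ne_zero, Nat.cast_ofNat]
    field_simp
  rw [Finset.sum_congr rfl fun i _ =>
      sum_ite_ne_setIntegral_region hM2 (monotoneOn_midpoints hs hβ) hρ p (s i) (p i),
    Finset.sum_add_distrib, Finset.sum_boole, card_filter_ne_of_card_filter_eq_half hM p hp,
    mul_add, hbalanced]
end

section
/- Let M = 2^m with m ≥ 2 (so that M is divisible by 4). Consider the set of all patterns, i.e., binary vectors p ∈ {0,1}^M with Hamming weight M/2. Define the reflection refl(p) by refl(p)_i = p_{M+1-i} and the inversion inv(p) by inv(p)_i = 1 − p_i. Group patterns into classes by declaring two patterns equivalent when one is obtained from the other by applying reflection, inversion, or their composition (i.e., the class of p is {p, inv(p), refl(p), inv(refl(p))}). Then the number Q of distinct classes is Q = (1/4)·( C(M, M/2) + C(M/2, M/4) + 2^{M/2} ), where C(n,k) denotes the binomial coefficient. -/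
/-- Reflection of a length-`M` bit pattern: `refl(p)_i = p_{M+1-i}` (0-indexed:
`refl(p) i = p (M - 1 - i)`, i.e. `p i.rev`). -/
def prefl (M : ℕ) (p : Fin M → Bool) : Fin M → Bool := fun i => p i.rev

/-- Inversion (coordinatewise binary complement) of a bit pattern. -/
def pinv (M : ℕ) (p : Fin M → Bool) : Fin M → Bool := fun i => !(p i)

/-!
The classes are the orbits of the Klein four-group `{id, inv, refl, inv ∘ refl}` acting on the
patterns, so by Burnside's lemma `4 Q` is the total number of fixed points of the four elements.
Every pattern is fixed by `id` and none by `inv`. A pattern fixed by `refl` is determined by its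
first half, which must have weight `M / 4`; a pattern fixed by `inv ∘ refl` is determined by an
arbitrary first half, and its weight is automatically `M / 2`.
-/

open Finset Function

section KleinFour
variable {α : Type*} [DecidableEq α] {σ τ : α → α}

def kleinOrbit (σ τ : α → α) (a : α) : Finset α := {a, σ a, τ a, σ (τ a)}

theorem self_mem_kleinOrbit (σ τ : α → α) (a : α) : a ∈ kleinOrbit σ τ a :=
  mem_insert_self _ _

def kleinFixCount (σ τ : α → α) (a : α) : ℕ :=
  1 + (if σ a = a then 1 else 0) + (if τ a = a then 1 else 0) + (if σ (τ a) = a then 1 else 0)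

theorem card_kleinOrbit_mul_kleinFixCount (hσ : Involutive σ) (hτ : Involutive τ)
    (hστ : Function.Commute σ τ) (a : α) :
    #(kleinOrbit σ τ a) * kleinFixCount σ τ a = 4 := by
  -- each coincidence among `a, σ a, τ a, σ (τ a)` is one of the three fixed-point conditions
  have e1 : σ a = τ a ↔ σ (τ a) = a := by
    rw [← hσ.injective.eq_iff, hσ]; exact eq_comm
  have e2 : σ a = σ (τ a) ↔ τ a = a := by rw [hσ.injective.eq_iff, eq_comm]
  have e3 : τ a = σ (τ a) ↔ σ a = a := by
    rw [hστ a, hτ.injective.eq_iff, eq_comm]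
  simp only [kleinOrbit, kleinFixCount, card_insert_eq_ite, mem_insert, mem_singleton,
    @eq_comm _ a, e1, e2, e3, card_singleton]
  by_cases h1 : σ a = a <;> by_cases h2 : τ a = a <;> by_cases h3 : σ (τ a) = a <;>
    simp [h1, h2, h3] at e1 e2 e3 ⊢

theorem kleinOrbit_eq_of_mem (hσ : Involutive σ) (hτ : Involutive τ)
    (hστ : Function.Commute σ τ) {a b : α} (hb : b ∈ kleinOrbit σ τ a) :
    kleinOrbit σ τ b = kleinOrbit σ τ a := by
  have hτσ : ∀ x, τ (σ x) = σ (τ x) := fun x => (hστ x).symm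
  simp only [kleinOrbit, mem_insert, mem_singleton] at hb
  rcases hb with rfl | rfl | rfl | rfl <;> ext x <;>
    simp only [kleinOrbit, mem_insert, mem_singleton, hσ _, hτ _, hτσ] <;> tauto

theorem kleinFixCount_eq (hσ : Involutive σ) (hτ : Involutive τ)
    (hστ : Function.Commute σ τ) (a : α) :
    kleinFixCount σ τ a = 4 / #(kleinOrbit σ τ a) := by
  rw [← card_kleinOrbit_mul_kleinFixCount hσ hτ hστ a, Nat.mul_div_cancel_left]
  exact card_pos.2 ⟨a, self_mem_kleinOrbit σ τ a⟩

theorem sum_kleinFixCount_kleinOrbit (hσ : Involutive σ) (hτ : Involutive τ)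
    (hστ : Function.Commute σ τ) (a : α) :
    ∑ b ∈ kleinOrbit σ τ a, kleinFixCount σ τ b = 4 := by
  calc ∑ b ∈ kleinOrbit σ τ a, kleinFixCount σ τ b
      = ∑ _b ∈ kleinOrbit σ τ a, 4 / #(kleinOrbit σ τ a) :=
        sum_congr rfl fun b hb => by
          rw [kleinFixCount_eq hσ hτ hστ, kleinOrbit_eq_of_mem hσ hτ hστ hb]
    _ = 4 := by
        rw [sum_const, smul_eq_mul, ← kleinFixCount_eq hσ hτ hστ,
          card_kleinOrbit_mul_kleinFixCount hσ hτ hστ]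

theorem four_mul_card_image_kleinOrbit (hσ : Involutive σ) (hτ : Involutive τ)
    (hστ : Function.Commute σ τ) (S : Finset α) (hσS : ∀ a ∈ S, σ a ∈ S)
    (hτS : ∀ a ∈ S, τ a ∈ S) :
    4 * #(S.image (kleinOrbit σ τ)) =
      #S + #{a ∈ S | σ a = a} + #{a ∈ S | τ a = a} + #{a ∈ S | σ (τ a) = a} := by
  have fiber :
      ∀ a ∈ S, {b ∈ S | kleinOrbit σ τ b = kleinOrbit σ τ a} = kleinOrbit σ τ a := by
    intro a ha
    ext b
    simp only [mem_filter]
    refine ⟨fun ⟨_, hb⟩ => hb ▸ self_mem_kleinOrbit σ τ b,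
      fun hb => ⟨?_, kleinOrbit_eq_of_mem hσ hτ hστ hb⟩⟩
    simp only [kleinOrbit, mem_insert, mem_singleton] at hb
    rcases hb with rfl | rfl | rfl | rfl
    exacts [ha, hσS _ ha, hτS _ ha, hσS _ (hτS _ ha)]
  calc 4 * #(S.image (kleinOrbit σ τ))
      = ∑ O ∈ S.image (kleinOrbit σ τ), ∑ b ∈ O, kleinFixCount σ τ b := by
        rw [mul_comm, ← smul_eq_mul, ← sum_const]
        refine sum_congr rfl fun O hO => ?_
        obtain ⟨a, -, rfl⟩ := mem_image.1 hO
        exact (sum_kleinFixCount_kleinOrbit hσ hτ hστ a).symm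
    _ = ∑ a ∈ S, kleinFixCount σ τ a := by
        rw [← sum_fiberwise_of_maps_to (g := kleinOrbit σ τ) fun a ha => mem_image_of_mem _ ha]
        refine sum_congr rfl fun O hO => ?_
        obtain ⟨a, ha, rfl⟩ := mem_image.1 hO
        rw [fiber a ha]
    _ = _ := by
        simp only [kleinFixCount, sum_add_distrib, card_filter, sum_const, smul_eq_mul, mul_one]

end KleinFour

namespace Pattern
variable {n : ℕ}

theorem involutive_pinv : Involutive (pinv n) := fun p => funext fun i => Bool.not_not (p i)

theorem involutive_prefl : Involutive (prefl n) := fun p => funext fun i => congrArg p i.rev_rev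

theorem pinv_ne_self (hn : 0 < n) (p : Fin n → Bool) : pinv n p ≠ p :=
  fun h => Bool.not_ne_self (p ⟨0, hn⟩) (congrFun h ⟨0, hn⟩)

def weight (p : Fin n → Bool) : ℕ := #{i | p i}

theorem card_filter_weight_eq (k : ℕ) : #{p : Fin n → Bool | weight p = k} = n.choose k := by
  rw [show n.choose k = #(powersetCard k (univ : Finset (Fin n))) by simp]
  refine card_nbij' (fun p => ({i | p i} : Finset (Fin n))) (fun s i => decide (i ∈ s))
    ?_ ?_ ?_ ?_ <;> intro x hx
  · simp only [mem_coe, mem_filter, mem_univ, true_and, mem_powersetCard, subset_univ] at hx ⊢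
    exact hx
  · simp only [mem_coe, mem_filter, mem_univ, true_and, mem_powersetCard] at hx ⊢
    simpa [weight] using hx.2
  · ext; simp
  · ext; simp

theorem weight_pinv (p : Fin n → Bool) : weight (pinv n p) = n - weight p := by
  have hcompl : (univ.filter fun i => pinv n p i) = (univ.filter fun i => p i)ᶜ := by
    ext; simp [pinv]
  rw [weight, weight, hcompl, card_compl, Fintype.card_fin]

theorem weight_prefl (p : Fin n → Bool) : weight (prefl n p) = weight p :=
  card_equiv Fin.revPerm fun i => by simp only [mem_filter, mem_univ, true_and]; rfl

theorem weight_append {m : ℕ} (u : Fin m → Bool) (v : Fin n → Bool) :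
    weight (Fin.append u v) = weight u + weight v := by
  simp only [weight, card_filter, Fin.sum_univ_add, Fin.append_left, Fin.append_right]

theorem rev_natAdd_self (i : Fin n) : (Fin.natAdd n i).rev = Fin.castAdd n i.rev :=
  Fin.ext (by simp only [Fin.val_rev, Fin.val_natAdd, Fin.val_castAdd]; omega)

theorem rev_castAdd_self (i : Fin n) : (Fin.castAdd n i).rev = Fin.natAdd n i.rev := by
  rw [← Fin.rev_rev (Fin.natAdd n _), rev_natAdd_self, Fin.rev_rev]

def mirrorAppend (f : Bool → Bool) (q : Fin n → Bool) : Fin (n + n) → Bool :=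
  Fin.append q (f ∘ prefl n q)

variable {f : Bool → Bool}

@[simp]
theorem mirrorAppend_castAdd (q : Fin n → Bool) (i : Fin n) :
    mirrorAppend f q (Fin.castAdd n i) = q i :=
  Fin.append_left _ _ _

theorem comp_prefl_mirrorAppend (hf : Involutive f) (q : Fin n → Bool) :
    f ∘ prefl (n + n) (mirrorAppend f q) = mirrorAppend f q := by
  ext i
  induction i using Fin.addCases with
  | left i =>
    simp only [mirrorAppend, prefl, comp_apply, rev_castAdd_self, Fin.append_left,
      Fin.append_right, Fin.rev_rev, hf _]
  | right i =>
    simp only [mirrorAppend, prefl, comp_apply, rev_natAdd_self, Fin.append_left,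
      Fin.append_right]

theorem mirrorAppend_restrict {p : Fin (n + n) → Bool} (hp : f ∘ prefl (n + n) p = p) :
    mirrorAppend f (fun i => p (Fin.castAdd n i)) = p := by
  ext i
  induction i using Fin.addCases with
  | left i => simp
  | right i =>
    conv_rhs => rw [← hp]
    simp only [mirrorAppend, prefl, comp_apply, rev_natAdd_self, Fin.append_right]

theorem weight_mirrorAppend (q : Fin n → Bool) :
    weight (mirrorAppend f q) = weight q + weight (f ∘ q) := by
  rw [mirrorAppend, weight_append]
  exact congrArg _ (weight_prefl (f ∘ q))

theorem card_filter_comp_prefl_eq_self (hf : Involutive f) (w : ℕ) :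
    #{p : Fin (n + n) → Bool | weight p = w ∧ f ∘ prefl (n + n) p = p} =
      #{q : Fin n → Bool | weight q + weight (f ∘ q) = w} := by
  refine card_nbij' (fun p i => p (Fin.castAdd n i)) (mirrorAppend f) ?_ ?_ ?_ ?_
  · intro p hp
    simp only [mem_coe, mem_filter, mem_univ, true_and] at hp ⊢
    rw [← hp.1, ← weight_mirrorAppend, mirrorAppend_restrict hp.2]
  · intro q hq
    simp only [mem_coe, mem_filter, mem_univ, true_and] at hq ⊢
    exact ⟨(weight_mirrorAppend q).trans hq, comp_prefl_mirrorAppend hf q⟩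
  · intro p hp
    simp only [mem_coe, mem_filter, mem_univ, true_and] at hp
    exact mirrorAppend_restrict hp.2
  · intro q _
    ext i
    exact mirrorAppend_castAdd q i

theorem card_palindromes (k : ℕ) :
    #{p : Fin (n + n) → Bool | weight p = 2 * k ∧ prefl (n + n) p = p} = n.choose k :=
  calc _ = #{q : Fin n → Bool | weight q + weight (id ∘ q) = 2 * k} :=
        card_filter_comp_prefl_eq_self (fun _ => rfl) (2 * k)
    _ = #{q : Fin n → Bool | weight q = k} := by
        congr 1; ext q; simp only [mem_filter, mem_univ, true_and, id_comp]; omega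
    _ = n.choose k := card_filter_weight_eq k

theorem card_antipalindromes :
    #{p : Fin (n + n) → Bool | weight p = n ∧ pinv (n + n) (prefl (n + n) p) = p} = 2 ^ n :=
  calc _ = #{q : Fin n → Bool | weight q + weight (pinv n q) = n} :=
        card_filter_comp_prefl_eq_self Bool.involutive_not n
    _ = #(univ : Finset (Fin n → Bool)) := by
        refine congrArg card (filter_true_of_mem fun q _ => ?_)
        rw [weight_pinv]
        exact Nat.add_sub_cancel' ((card_le_univ _).trans (Fintype.card_fin n).le)
    _ = 2 ^ n := by simp

theorem four_mul_card_classes {k : ℕ} (hk : 0 < k) :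
    4 * #(image (kleinOrbit (pinv (2 * k + 2 * k)) (prefl (2 * k + 2 * k)))
        {p : Fin (2 * k + 2 * k) → Bool | weight p = 2 * k}) =
      (2 * k + 2 * k).choose (2 * k) + (2 * k).choose k + 2 ^ (2 * k) := by
  have weight_pinv_self {p : Fin (2 * k + 2 * k) → Bool} (hp : weight p = 2 * k) :
      weight (pinv _ p) = 2 * k := by
    rw [weight_pinv, hp]; omega
  rw [four_mul_card_image_kleinOrbit involutive_pinv involutive_prefl (fun _ => rfl) _
      (fun p hp => by simpa using weight_pinv_self (by simpa using hp))
      (fun p hp => by simpa [weight_prefl] using hp),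
    filter_filter, filter_filter, filter_filter, card_filter_weight_eq,
    filter_false_of_mem fun p _ hp => pinv_ne_self (by omega) p hp.2, card_palindromes,
    card_antipalindromes, card_empty, add_zero]

end Pattern

theorem number_of_pattern_classes (m M : ℕ) (hm : 2 ≤ m) (hM : M = 2 ^ m) :
    4 * ((Finset.univ.filter
            (fun p : Fin M → Bool =>
              (Finset.univ.filter (fun i => p i = true)).card = M / 2)).image
          (fun p => ({p, pinv M p, prefl M p, pinv M (prefl M p)} :
            Finset (Fin M → Bool)))).card
      = Nat.choose M (M / 2) + Nat.choose (M / 2) (M / 4) + 2 ^ (M / 2) := by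
  obtain ⟨k, hk, rfl⟩ : ∃ k, 0 < k ∧ M = 2 * k + 2 * k := by
    refine ⟨2 ^ (m - 2), by positivity, ?_⟩
    rw [hM, ← two_mul, ← pow_succ', ← pow_succ']
    congr 1; omega
  rw [show (2 * k + 2 * k) / 2 = 2 * k by omega, show (2 * k + 2 * k) / 4 = k by omega]
  exact Pattern.four_mul_card_classes hk
end

section
/- Let M be divisible by 4. The number of asymmetric (ASY) patterns of length M — binary vectors p ∈ {0,1}^M of Hamming weight M/2 satisfying neither refl(p) = p nor inv(refl(p)) = p — equals C(M, M/2) − C(M/2, M/4) − 2^{M/2}, and this number is divisible by 4. -/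
/-!
Writing a pattern of length `n + n` as `Fin.append a b`, it is reflected iff `b = a ∘ rev` and
anti-reflected iff `b = !(a ∘ rev)`. So reflected patterns of weight `2w` correspond to halves of
weight `w`, anti-reflected patterns to arbitrary halves (their weight is automatically `n`), and
the two classes are disjoint because a nonempty pattern is never its own inversion. This gives
the count.

Inversion and reflection are commuting involutions, so they define an action of the Klein
four-group `ZMod 2 × ZMod 2`. It preserves the asymmetric patterns, and the two asymmetry
conditions together with `inv p ≠ p` say precisely that the action is free on them; hence they
split into orbits of size 4.
-/

open Finset Function

theorem Function.Involutive.iterate_mod_two {α : Type*} {f : α → α} (hf : Involutive f) (n : ℕ) :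
    f^[n % 2] = f^[n] := by
  conv_rhs => rw [← Nat.mod_add_div n 2, iterate_add, iterate_mul,
    involutive_iff_iter_2_eq_id.1 hf, iterate_id, comp_id]

abbrev kleinAddAction {α : Type*} {f g : α → α} (hf : Involutive f) (hg : Involutive g)
    (hfg : Function.Commute f g) : AddAction (ZMod 2 × ZMod 2) α where
  vadd x a := f^[x.1.val] (g^[x.2.val] a)
  zero_vadd _ := rfl
  add_vadd x y a := by
    change f^[(x.1 + y.1).val] (g^[(x.2 + y.2).val] a)
      = f^[x.1.val] (g^[x.2.val] (f^[y.1.val] (g^[y.2.val] a)))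
    rw [ZMod.val_add, ZMod.val_add, hf.iterate_mod_two, hg.iterate_mod_two, iterate_add_apply,
      iterate_add_apply, (hfg.iterate_iterate y.1.val x.2.val).symm.eq]

theorem AddAction.card_addGroup_dvd_card_of_free {G α : Type*} [AddGroup G] [Finite G]
    [AddAction G α] (s : Finset α) (hs : ∀ g : G, ∀ x ∈ s, g +ᵥ x ∈ s)
    (hfree : ∀ g : G, ∀ x ∈ s, g +ᵥ x = x → g = 0) : Nat.card G ∣ #s := by
  let S : SubAddAction G α := ⟨s, fun g _ hx => hs g _ hx⟩
  have hstab : ∀ x : S, AddAction.stabilizer G x = ⊥ := fun x => by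
    ext g
    simp only [AddAction.mem_stabilizer_iff, AddSubgroup.mem_bot]
    exact ⟨fun h => hfree g x x.2 (congrArg Subtype.val h), fun h => h ▸ zero_vadd G x⟩
  have hS : Nat.card S = #s := Nat.card_eq_finsetCard s
  rw [← hS, Nat.card_congr (AddAction.selfEquivOrbitsQuotientProd hstab), Nat.card_prod]
  exact dvd_mul_left _ _

theorem four_dvd_card_of_commute_involutive {α : Type*} {f g : α → α} (hf : Involutive f)
    (hg : Involutive g) (hfg : Function.Commute f g) {s : Finset α}
    (hfs : Set.MapsTo f s s) (hgs : Set.MapsTo g s s) (hf' : ∀ x ∈ s, f x ≠ x)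
    (hg' : ∀ x ∈ s, g x ≠ x) (hfg' : ∀ x ∈ s, f (g x) ≠ x) : 4 ∣ #s := by
  let := kleinAddAction hf hg hfg
  have hcard : Nat.card (ZMod 2 × ZMod 2) = 4 := by simp
  refine hcard ▸ AddAction.card_addGroup_dvd_card_of_free s
    (fun x a ha => (hfs.iterate _) ((hgs.iterate _) ha)) ?_
  rintro ⟨i, j⟩ a ha h
  fin_cases i <;> fin_cases j
  · rfl
  · exact (hg' a ha h).elim
  · exact (hf' a ha h).elim
  · exact (hfg' a ha h).elim

def weight {ι : Type*} [Fintype ι] (p : ι → Bool) : ℕ := #{i | p i = true}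

theorem card_filter_weight_eq (ι : Type*) [Fintype ι] [DecidableEq ι] (k : ℕ) :
    #{p : ι → Bool | weight p = k} = (Fintype.card ι).choose k := by
  rw [← card_univ, ← card_powersetCard]
  refine card_nbij' (fun p => ({i | p i = true} : Finset ι)) (fun s i => decide (i ∈ s))
    ?_ ?_ ?_ ?_
  · intro p hp
    rw [mem_coe, mem_filter] at hp
    simpa [weight] using hp.2
  · intro s hs
    rw [mem_coe, mem_powersetCard] at hs
    rw [mem_coe, mem_filter]
    simpa [weight] using hs.2
  · intro p _
    simp
  · intro s _
    simp

theorem weight_comp_equiv {ι κ : Type*} [Fintype ι] [Fintype κ] (p : ι → Bool) (e : κ ≃ ι) :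
    weight (p ∘ e) = weight p := by
  simp only [weight, card_filter]
  exact e.sum_comp fun i => if p i = true then 1 else 0

theorem weight_comp_rev {n : ℕ} (p : Fin n → Bool) : weight (p ∘ Fin.rev) = weight p :=
  weight_comp_equiv p Fin.revPerm

theorem weight_append {m n : ℕ} (a : Fin m → Bool) (b : Fin n → Bool) :
    weight (Fin.append a b) = weight a + weight b := by
  simp only [weight, card_filter, Fin.sum_univ_add, Fin.append_left, Fin.append_right]

theorem weight_prefl (M : ℕ) (p : Fin M → Bool) : weight (prefl M p) = weight p :=
  weight_comp_rev p

theorem weight_pinv_add_weight (M : ℕ) (p : Fin M → Bool) :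
    weight (pinv M p) + weight p = M := by
  have := card_filter_add_card_filter_not (s := univ) (fun i => p i = true)
  simp only [card_univ, Fintype.card_fin, Bool.not_eq_true] at this
  simp only [weight, pinv, Bool.not_eq_true']
  omega

theorem pinv_involutive (M : ℕ) : Involutive (pinv M) :=
  fun p => funext fun i => Bool.not_not (p i)

theorem prefl_involutive (M : ℕ) : Involutive (prefl M) :=
  fun p => funext fun i => congrArg p (Fin.rev_rev i)

theorem pinv_commute_prefl (M : ℕ) : Function.Commute (pinv M) (prefl M) :=
  fun _ => rfl

theorem pinv_ne_self {M : ℕ} (hM : 0 < M) (p : Fin M → Bool) : pinv M p ≠ p :=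
  fun h => Bool.not_ne_self (p ⟨0, hM⟩) (congrFun h _)

theorem Fin.append_inj_iff {α : Type*} {m n : ℕ} {a a' : Fin m → α} {b b' : Fin n → α} :
    Fin.append a b = Fin.append a' b' ↔ a = a' ∧ b = b' :=
  ⟨fun h => Prod.ext_iff.1 ((Fin.appendEquiv m n).injective (a₁ := (a, b)) (a₂ := (a', b')) h),
    fun ⟨ha, hb⟩ => ha ▸ hb ▸ rfl⟩

theorem prefl_append {n : ℕ} (a b : Fin n → Bool) :
    prefl (n + n) (Fin.append a b) = Fin.append (b ∘ Fin.rev) (a ∘ Fin.rev) := by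
  funext i
  simp [prefl, Fin.append_rev]

theorem pinv_append {m n : ℕ} (a : Fin m → Bool) (b : Fin n → Bool) :
    pinv (m + n) (Fin.append a b) = Fin.append (pinv m a) (pinv n b) := by
  funext i
  refine Fin.addCases (fun i => ?_) (fun i => ?_) i <;> simp [pinv]

theorem card_filter_eq_of_append_iff {α : Type*} [Fintype α] [DecidableEq α] {m n : ℕ}
    (P : (Fin (m + n) → α) → Prop) [DecidablePred P] (R : (Fin m → α) → Prop) [DecidablePred R]
    (φ : (Fin m → α) → Fin n → α) (hP : ∀ a b, P (Fin.append a b) ↔ R a ∧ b = φ a) :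
    #{p | P p} = #{a | R a} := by
  have hP' (p) : P p ↔ R (p ∘ Fin.castAdd n) ∧ p ∘ Fin.natAdd m = φ (p ∘ Fin.castAdd n) := by
    have := hP (fun i => p (Fin.castAdd n i)) (fun i => p (Fin.natAdd m i))
    rwa [Fin.append_castAdd_natAdd] at this
  refine card_nbij' (fun p => p ∘ Fin.castAdd n) (fun a => Fin.append a (φ a)) ?_ ?_ ?_ ?_
  · intro p hp
    simp only [coe_filter, mem_univ, true_and, Set.mem_ofPred_eq, hP'] at hp ⊢
    exact hp.1
  · intro a ha
    simpa [hP] using ha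
  · intro p hp
    simp only [coe_filter, mem_univ, true_and, Set.mem_ofPred_eq, hP'] at hp
    change Fin.append _ (φ (p ∘ Fin.castAdd n)) = p
    rw [← hp.2]
    exact Fin.append_castAdd_natAdd
  · intro a _
    funext i
    exact Fin.append_left a (φ a) i

theorem card_palindromes_of_weight {n : ℕ} (w : ℕ) :
    #{p : Fin (n + n) → Bool | weight p = w + w ∧ prefl (n + n) p = p} = n.choose w := by
  rw [card_filter_eq_of_append_iff _ (fun a => weight a = w) (· ∘ Fin.rev), card_filter_weight_eq,
    Fintype.card_fin]
  intro a b
  rw [prefl_append, Fin.append_inj_iff, weight_append]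
  constructor
  · rintro ⟨hw, -, rfl⟩
    rw [weight_comp_rev] at hw
    exact ⟨by omega, rfl⟩
  · rintro ⟨hw, rfl⟩
    rw [weight_comp_rev, hw, comp_assoc, Fin.rev_involutive.comp_self, comp_id]
    exact ⟨rfl, rfl, rfl⟩

theorem card_antipalindromes (n : ℕ) :
    #{p : Fin (n + n) → Bool | weight p = n ∧ pinv (n + n) (prefl (n + n) p) = p} = 2 ^ n := by
  rw [card_filter_eq_of_append_iff _ (fun _ => True) (fun a => pinv n a ∘ Fin.rev)]
  · simp
  intro a b
  rw [prefl_append, pinv_append, Fin.append_inj_iff, weight_append]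
  constructor
  · rintro ⟨-, -, rfl⟩
    exact ⟨trivial, rfl⟩
  · rintro ⟨-, rfl⟩
    refine ⟨?_, ?_, rfl⟩
    · rw [weight_comp_rev, add_comm, weight_pinv_add_weight]
    · rw [comp_assoc, Fin.rev_involutive.comp_self, comp_id, pinv_involutive]

def patterns (M : ℕ) : Finset (Fin M → Bool) := {p | weight p = M / 2}

def asymmetricPatterns (M : ℕ) : Finset (Fin M → Bool) :=
  {p ∈ patterns M | prefl M p ≠ p ∧ pinv M (prefl M p) ≠ p}

theorem mem_asymmetricPatterns {M : ℕ} {p : Fin M → Bool} :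
    p ∈ asymmetricPatterns M ↔ weight p = M / 2 ∧ prefl M p ≠ p ∧ pinv M (prefl M p) ≠ p := by
  simp [asymmetricPatterns, patterns]

theorem card_patterns (M : ℕ) : #(patterns M) = M.choose (M / 2) := by
  rw [patterns, card_filter_weight_eq, Fintype.card_fin]

theorem card_asymmetricPatterns_add_card_add_card {M : ℕ} (hM : 0 < M) :
    #(asymmetricPatterns M) + #{p ∈ patterns M | prefl M p = p}
      + #{p ∈ patterns M | pinv M (prefl M p) = p} = #(patterns M) := by
  have hdisj : Disjoint {p ∈ patterns M | prefl M p = p}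
      {p ∈ patterns M | pinv M (prefl M p) = p} :=
    disjoint_filter.2 fun p _ hre hare => pinv_ne_self hM p (by rwa [hre] at hare)
  rw [add_assoc, ← card_union_of_disjoint hdisj, ← filter_or, asymmetricPatterns, add_comm]
  simpa only [not_or] using card_filter_add_card_filter_not (s := patterns M)
    (fun p => prefl M p = p ∨ pinv M (prefl M p) = p)

theorem card_asymmetricPatterns {M : ℕ} (hM : 4 ∣ M) :
    #(asymmetricPatterns M) = M.choose (M / 2) - (M / 2).choose (M / 4) - 2 ^ (M / 2) := by
  obtain ⟨w, rfl⟩ : ∃ w, M = w + w + (w + w) := ⟨M / 4, by omega⟩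
  have half : (w + w + (w + w)) / 2 = w + w := by omega
  rw [half, show (w + w + (w + w)) / 4 = w by omega]
  rcases Nat.eq_zero_or_pos w with rfl | hw
  -- `M = 0`: the two symmetry classes coincide, and the formula holds as `1 - 1 - 1 = 0` in `ℕ`
  · decide
  have h := card_asymmetricPatterns_add_card_add_card (M := w + w + (w + w)) (by omega)
  rw [card_patterns, patterns, filter_filter, filter_filter, half, card_palindromes_of_weight,
    card_antipalindromes] at h
  omega

theorem four_dvd_card_asymmetricPatterns {M : ℕ} (hM : 2 ∣ M) :
    4 ∣ #(asymmetricPatterns M) := by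
  have hinv := pinv_involutive M
  refine four_dvd_card_of_commute_involutive hinv (prefl_involutive M) (pinv_commute_prefl M)
    ?_ ?_ ?_ (fun p hp => (mem_asymmetricPatterns.1 hp).2.1)
    (fun p hp => (mem_asymmetricPatterns.1 hp).2.2)
  · intro p hp
    obtain ⟨hw, hre, hare⟩ := mem_asymmetricPatterns.1 hp
    refine mem_asymmetricPatterns.2 ⟨?_, fun h => hre (hinv.injective h), ?_⟩
    · have := weight_pinv_add_weight M p
      omega
    · rw [← pinv_commute_prefl M p, hinv]
      exact fun h => hare (hinv.eq_iff.2 h)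
  · intro p hp
    obtain ⟨hw, hre, hare⟩ := mem_asymmetricPatterns.1 hp
    refine mem_asymmetricPatterns.2 ⟨by rwa [weight_prefl], ?_, ?_⟩
    · rw [prefl_involutive M]
      exact Ne.symm hre
    · rw [prefl_involutive M]
      exact fun h => hare (hinv.eq_iff.1 h).symm
  · intro p hp
    obtain ⟨i, -⟩ := Function.ne_iff.1 (mem_asymmetricPatterns.1 hp).2.1
    exact pinv_ne_self i.pos p

theorem number_of_ASY_patterns (M : ℕ) (hM : 4 ∣ M) :
    ((Finset.univ.filter
        (fun p : Fin M → Bool =>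
          (Finset.univ.filter (fun i => p i = true)).card = M / 2)).filter
      (fun p => prefl M p ≠ p ∧ pinv M (prefl M p) ≠ p)).card
        = Nat.choose M (M / 2) - Nat.choose (M / 2) (M / 4) - 2 ^ (M / 2)
    ∧ 4 ∣ ((Finset.univ.filter
        (fun p : Fin M → Bool =>
          (Finset.univ.filter (fun i => p i = true)).card = M / 2)).filter
      (fun p => prefl M p ≠ p ∧ pinv M (prefl M p) ≠ p)).card := by
  change #(asymmetricPatterns M) = _ ∧ 4 ∣ #(asymmetricPatterns M)
  exact ⟨card_asymmetricPatterns hM,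
    four_dvd_card_asymmetricPatterns ((by norm_num : 2 ∣ 4).trans hM)⟩
end
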